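/- Let b be a connected locally finite graph over (X,m) and S > 0. Define ρ_S(x,y) := sup{ρ(x,y) : ρ is an intrinsic pseudo-metric with jump size at most S}. Then ρ_S takes only finite values, and ρ_S is itself a pseudo-metric: ρ_S(x,x) = 0, ρ_S is symmetric, and ρ_S(x,z) ≤ ρ_S(x,y) + ρ_S(y,z) for all x, y, z ∈ X. -/
import Mathlib


noncomputable section

/-- A pseudo-metric on the vertex set. -/
def IsPseudoMetric {X : Type*} (ρ : X → X → ℝ) : Prop :=
  (∀ x, ρ x x = 0) ∧ (∀ x y, 0 ≤ ρ x y) ∧ (∀ x y, ρ x y = ρ y x) ∧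
    ∀ x y z, ρ x z ≤ ρ x y + ρ y z

/-- A pseudo-metric `ρ` is intrinsic if `Σ_y b(x,y) ρ(x,y)² ≤ m(x)` for all `x`. -/
def IsIntrinsic {X : Type*} (b : X → X → ℝ) (m : X → ℝ) (ρ : X → X → ℝ) : Prop :=
  ∀ x, ∑' y, b x y * ρ x y ^ 2 ≤ m x

/-- The jump size of `ρ` is at most `S`. -/
def JumpLE {X : Type*} (b : X → X → ℝ) (ρ : X → X → ℝ) (S : ℝ) : Prop :=
  ∀ x y, 0 < b x y → ρ x y ≤ S

/-- The set of values `ρ(x,y)` over all intrinsic pseudo-metrics with jump size at most `S`. -/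
def rhoSSet {X : Type*} (b : X → X → ℝ) (m : X → ℝ) (S : ℝ) (x y : X) : Set ℝ :=
  {r | ∃ ρ : X → X → ℝ, IsPseudoMetric ρ ∧ IsIntrinsic b m ρ ∧ JumpLE b ρ S ∧ r = ρ x y}

/-- `ρ_S(x,y)`: supremum of `ρ(x,y)` over all intrinsic pseudo-metrics with jump size at most
`S`. -/
def rhoS {X : Type*} (b : X → X → ℝ) (m : X → ℝ) (S : ℝ) (x y : X) : ℝ :=
  sSup (rhoSSet b m S x y)

theorem stmt18 {X : Type*} [Countable X]
    (b : X → X → ℝ) (m : X → ℝ)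
    (hb_nonneg : ∀ x y, 0 ≤ b x y) (hb_symm : ∀ x y, b x y = b y x)
    (hb_loop : ∀ x, b x x = 0)
    (hlf : ∀ x, (Function.support (b x)).Finite)
    (hm_pos : ∀ x, 0 < m x)
    (hconn : ∀ x y, Relation.ReflTransGen (fun u v => 0 < b u v) x y)
    (S : ℝ) (hS : 0 < S) :
    -- `ρ_S` takes only finite values …
    (∀ x y : X, BddAbove (rhoSSet b m S x y)) ∧
    -- … and is itself a pseudo-metric:
    (∀ x : X, rhoS b m S x x = 0) ∧
    (∀ x y : X, rhoS b m S x y = rhoS b m S y x) ∧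
    (∀ x y z : X, rhoS b m S x z ≤ rhoS b m S x y + rhoS b m S y z) := by
  -- the zero pseudo-metric belongs to every set
  have hzero : ∀ x y : X, (0:ℝ) ∈ rhoSSet b m S x y := by
    intro x y
    refine ⟨fun _ _ => 0, ⟨fun _ => rfl, fun _ _ => le_refl 0, fun _ _ => rfl,
      fun _ _ _ => by norm_num⟩, ?_, fun _ _ _ => hS.le, rfl⟩
    intro x
    simp [(hm_pos x).le]
  have hne : ∀ x y : X, (rhoSSet b m S x y).Nonempty := fun x y => ⟨0, hzero x y⟩
  -- uniform bound via connectivity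
  have hbdd : ∀ x y : X, BddAbove (rhoSSet b m S x y) := by
    intro x y
    have key : ∃ C : ℝ, ∀ ρ : X → X → ℝ, IsPseudoMetric ρ → JumpLE b ρ S → ρ x y ≤ C := by
      induction hconn x y with
      | refl => exact ⟨0, fun ρ hρ _ => le_of_eq (hρ.1 x)⟩
      | @tail u v _ hbv ih =>
        obtain ⟨C, hC⟩ := ih
        exact ⟨C + S, fun ρ hρ hJ =>
          (hρ.2.2.2 x u v).trans (add_le_add (hC ρ hρ hJ) (hJ u v hbv))⟩
    obtain ⟨C, hC⟩ := key
    exact ⟨C, fun r hr => by obtain ⟨ρ, hρ, _, hJ, rfl⟩ := hr; exact hC ρ hρ hJ⟩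
  refine ⟨hbdd, ?_, ?_, ?_⟩
  · intro x
    have hsub : rhoSSet b m S x x = {0} := by
      apply Set.eq_singleton_iff_unique_mem.mpr
      exact ⟨hzero x x, fun r hr => by obtain ⟨ρ, hρ, _, _, rfl⟩ := hr; exact hρ.1 x⟩
    rw [rhoS, hsub, csSup_singleton]
  · intro x y
    have hset : rhoSSet b m S x y = rhoSSet b m S y x := by
      ext r
      constructor <;>
        · rintro ⟨ρ, hρ, hI, hJ, rfl⟩
          exact ⟨ρ, hρ, hI, hJ, (hρ.2.2.1 _ _)⟩
    rw [rhoS, rhoS, hset]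
  · intro x y z
    apply csSup_le (hne x z)
    rintro r ⟨ρ, hρ, hI, hJ, rfl⟩
    have h1 : ρ x y ≤ rhoS b m S x y := le_csSup (hbdd x y) ⟨ρ, hρ, hI, hJ, rfl⟩
    have h2 : ρ y z ≤ rhoS b m S y z := le_csSup (hbdd y z) ⟨ρ, hρ, hI, hJ, rfl⟩
    exact (hρ.2.2.2 x y z).trans (add_le_add h1 h2)

end
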